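/- arXiv:2211.08891 — 2 statements merged into one kernel-verified Lean document; each statement's English description precedes it below -/
import Mathlib

section
/- In a 1-SEVPA with no bin states, if there is a run from (q₀, ε) to (p, ε) labeled by a well-matched word u, then there exist words t'', t' and a final state q_f such that t'' u t' is accepted by the automaton, where the run on t'' goes from (q₀, ε) to (q₀, σ) for some stack σ and the run on t' goes from (p, σ) to (q_f, ε). -/
/-- Symbols of a pushdown alphabet: call symbols from `C`, matching return symbols
(one `ret a` for each call `a`), and internal symbols from `I`. -/
inductive PSym (C I : Type) : Type
  | call : C → PSym C I
  | ret  : C → PSym C I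
  | int  : I → PSym C I

/-- Weight of a symbol for the call/return balance. -/
def symWeight {C I : Type} : PSym C I → ℤ
  | .call _ => 1
  | .ret _ => -1
  | .int _ => 0

/-- The call/return balance function β. -/
def balance {C I : Type} (w : List (PSym C I)) : ℤ :=
  (w.map symWeight).sum

/-- Well-matched words over a pushdown alphabet. -/
inductive WM {C I : Type} : List (PSym C I) → Prop
  | empty : WM []
  | int (i : I) : WM [PSym.int i]
  | append {w w' : List (PSym C I)} : WM w → WM w' → WM (w ++ w')
  | wrap (a : C) {w : List (PSym C I)} : WM w → WM (PSym.call a :: w ++ [PSym.ret a])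

/-- A visibly pushdown automaton over the pushdown alphabet `(C, {ā | a ∈ C}, I)`,
with states `Q` and stack alphabet `Γ`. -/
structure VPA (C I Q Γ : Type) where
  callTr : Q → C → Q → Γ → Prop
  retTr  : Q → C → Γ → Q → Prop
  intTr  : Q → I → Q → Prop
  init : Set Q
  final : Set Q

/-- One step of the transition system of a VPA on configurations (state, stack). -/
inductive VPA.Step {C I Q Γ : Type} (A : VPA C I Q Γ) :
    Q × List Γ → PSym C I → Q × List Γ → Prop
  | call {q q' : Q} {γ : Γ} {σ : List Γ} {a : C} :
      A.callTr q a q' γ → VPA.Step A (q, σ) (PSym.call a) (q', γ :: σ)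
  | ret {q q' : Q} {γ : Γ} {σ : List Γ} {a : C} :
      A.retTr q a γ q' → VPA.Step A (q, γ :: σ) (PSym.ret a) (q', σ)
  | int {q q' : Q} {σ : List Γ} {a : I} :
      A.intTr q a q' → VPA.Step A (q, σ) (PSym.int a) (q', σ)

/-- A run of a VPA labeled by a word, between two configurations. -/
inductive VPA.Run {C I Q Γ : Type} (A : VPA C I Q Γ) :
    Q × List Γ → List (PSym C I) → Q × List Γ → Prop
  | refl (c : Q × List Γ) : VPA.Run A c [] c
  | step {c c' c'' : Q × List Γ} {a : PSym C I} {w : List (PSym C I)} :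
      VPA.Step A c a c' → VPA.Run A c' w c'' → VPA.Run A c (a :: w) c''

/-- Acceptance: a run from an initial configuration (initial state, empty stack)
to a final configuration (final state, empty stack). -/
def VPA.Accepts {C I Q Γ : Type} (A : VPA C I Q Γ) (w : List (PSym C I)) : Prop :=
  ∃ q₀ ∈ A.init, ∃ qf ∈ A.final, VPA.Run A (q₀, []) w (qf, [])

/-- A VPA is deterministic if it has a single initial state and no two distinct
transitions share the same left-hand side. -/
def VPA.Deterministic {C I Q Γ : Type} (A : VPA C I Q Γ) : Prop :=
  (∃ q₀ : Q, A.init = {q₀}) ∧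
  (∀ q a q₁ γ₁ q₂ γ₂, A.callTr q a q₁ γ₁ → A.callTr q a q₂ γ₂ → q₁ = q₂ ∧ γ₁ = γ₂) ∧
  (∀ q a γ q₁ q₂, A.retTr q a γ q₁ → A.retTr q a γ q₂ → q₁ = q₂) ∧
  (∀ q a q₁ q₂, A.intTr q a q₁ → A.intTr q a q₂ → q₁ = q₂)

/-- A 1-SEVPA: a deterministic VPA with single initial state `q₀`, stack alphabet
`Q × C`, all of whose call transitions go to `q₀` pushing (source state, call symbol). -/
def VPA.IsOneSEVPA {C I Q : Type} (A : VPA C I Q (Q × C)) (q₀ : Q) : Prop :=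
  A.Deterministic ∧ A.init = {q₀} ∧
  ∀ q a q' γ, A.callTr q a q' γ → q' = q₀ ∧ γ = (q, a)

/-- `A` (with initial state `q₀`) has no bin states: every state occurs on some
path from the initial configuration to an accepting configuration. -/
def NoBinStates {C I Q Γ : Type} (A : VPA C I Q Γ) (q₀ : Q) : Prop :=
  ∀ p : Q, ∃ (w : List (PSym C I)) (σ : List Γ) (w' : List (PSym C I)) (q : Q),
    q ∈ A.final ∧ VPA.Run A (q₀, []) w (p, σ) ∧ VPA.Run A (p, σ) w' (q, [])

section Helpers

variable {C I Q Γ : Type} {A : VPA C I Q Γ}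

lemma run_append {c c' c'' : Q × List Γ} {w w' : List (PSym C I)}
    (h : A.Run c w c') (h' : A.Run c' w' c'') : A.Run c (w ++ w') c'' := by
  induction h with
  | refl => exact h'
  | step s _ ih => exact VPA.Run.step s (ih h')

lemma run_split {c c'' : Q × List Γ} {w : List (PSym C I)} {a : PSym C I}
    (h : A.Run c (w ++ [a]) c'') : ∃ c', A.Run c w c' ∧ A.Step c' a c'' := by
  induction w generalizing c with
  | nil =>
    cases h with
    | step s r => cases r with | refl => exact ⟨c, VPA.Run.refl c, s⟩
  | cons b w ih =>
    cases h with
    | step s r =>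
      obtain ⟨c', r', s'⟩ := ih r
      exact ⟨c', VPA.Run.step s r', s'⟩

lemma step_lift {c c' : Q × List Γ} {a : PSym C I} (τ : List Γ)
    (h : A.Step c a c') : A.Step (c.1, c.2 ++ τ) a (c'.1, c'.2 ++ τ) := by
  cases h with
  | call h => exact VPA.Step.call h
  | ret h => exact VPA.Step.ret h
  | int h => exact VPA.Step.int h

lemma run_lift {c c' : Q × List Γ} {w : List (PSym C I)} (τ : List Γ)
    (h : A.Run c w c') : A.Run (c.1, c.2 ++ τ) w (c'.1, c'.2 ++ τ) := by
  induction h with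
  | refl => exact VPA.Run.refl _
  | step s _ ih => exact VPA.Run.step (step_lift τ s) ih

end Helpers

lemma reach_q0 {C I Q : Type} {A : VPA C I Q (Q × C)} {q₀ : Q}
    (hA : A.IsOneSEVPA q₀) :
    ∀ (w : List (PSym C I)) (p : Q) (σ : List (Q × C)),
      A.Run (q₀, []) w (p, σ) → ∀ σ₂, σ₂ <:+ σ →
      ∃ t, A.Run (q₀, []) t (q₀, σ₂) := by
  intro w
  induction w using List.reverseRecOn with
  | nil =>
    intro p σ h σ₂ hs
    cases h
    rw [List.suffix_nil.mp hs]
    exact ⟨[], VPA.Run.refl _⟩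
  | append_singleton w a ih =>
    intro p σ h σ₂ hs
    obtain ⟨⟨q', σ'⟩, hpre, hstep⟩ := run_split h
    cases hstep with
    | @call _ _ γ _ a hc =>
      rcases List.suffix_cons_iff.mp hs with heq | hs'
      · subst heq
        obtain ⟨hq0, hγ⟩ := hA.2.2 _ _ _ _ hc
        subst hq0
        exact ⟨w ++ [PSym.call a],
          run_append hpre (VPA.Run.step (VPA.Step.call hc) (VPA.Run.refl _))⟩
      · exact ih q' σ' hpre σ₂ hs'
    | @ret _ _ γ _ a hr =>
      exact ih q' (γ :: σ) hpre σ₂ (hs.trans (List.suffix_cons γ σ))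
    | int h' => exact ih q' σ hpre σ₂ hs

/-- In a 1-SEVPA without bin states, any run from `(q₀, ε)` to `(p, ε)` on a
well-matched word `u` extends to an accepted word `t'' ++ u ++ t'`, where `t''`
leads from `(q₀, ε)` to `(q₀, σ)` and `t'` leads from `(p, σ)` to an accepting
configuration. -/
theorem sevpa_no_bin_extend {C I Q : Type} (A : VPA C I Q (Q × C)) (q₀ : Q)
    (h : A.IsOneSEVPA q₀) (hnb : NoBinStates A q₀)
    (p : Q) (u : List (PSym C I)) (hu : WM u)
    (hrun : VPA.Run A (q₀, []) u (p, [])) :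
    ∃ (t'' t' : List (PSym C I)) (σ : List (Q × C)) (qf : Q),
      qf ∈ A.final ∧
      VPA.Run A (q₀, []) t'' (q₀, σ) ∧
      VPA.Run A (p, σ) t' (qf, []) ∧
      A.Accepts (t'' ++ u ++ t') := by
  obtain ⟨w, σ, w', qf, hqf, h1, h2⟩ := hnb p
  obtain ⟨t'', ht''⟩ := reach_q0 h w p σ h1 σ (List.suffix_refl σ)
  refine ⟨t'', w', σ, qf, hqf, ht'', h2, q₀, ?_, qf, hqf, ?_⟩
  · rw [h.2.1]; rfl
  · have hu' : A.Run (q₀, σ) u (p, σ) := run_lift σ hrun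
    exact run_append (run_append ht'' hu') h2
end

section
/- For a VPA A, a state p is not a bin state if and only if p belongs to the set R = { p ∈ Q | ∃ words w, w', stack σ, final state q, with runs (q₀, ε) →^{w} (q₀, σ) and (p, σ) →^{w'} (q, ε) }, provided A is a 1-SEVPA in which every state is reachable (minimal). -/
/-
Proof idea: in a 1-SEVPA every call leads to `q₀`, so the part of a run after a
call only depends on the call's target `q₀`, never on the stack beneath it. Along
any run from `(q₀, ε)` one therefore keeps the invariant `VPA.Rooted`: the current
state is reachable from `q₀` over an arbitrary (untouched) stack, and each stack
symbol is pushed by a call from such a state. The second half of the invariant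
rebuilds the stack `σ` from `(q₀, ε)` ending in `q₀`; the first half leads from
`(q₀, σ)` to `(p, σ)` for any reachable `p`.
-/

namespace VPA

variable {C I Q Γ : Type} {A : VPA C I Q Γ}

theorem Run.single {c c' : Q × List Γ} {x : PSym C I} (hs : A.Step c x c') :
    A.Run c [x] c' :=
  .step hs (.refl _)

theorem Run.append {c c' c'' : Q × List Γ} {w w' : List (PSym C I)}
    (h : A.Run c w c') (h' : A.Run c' w' c'') : A.Run c (w ++ w') c'' := by
  induction h with
  | refl => exact h'
  | step s _ ih => exact .step s (ih h')

def NeutrallyReachable (A : VPA C I Q Γ) (q₀ r : Q) : Prop :=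
  ∀ σ : List Γ, ∃ s : List (PSym C I), A.Run (q₀, σ) s (r, σ)

def Pushable (A : VPA C I Q Γ) (q₀ : Q) (γ : Γ) : Prop :=
  ∃ (r : Q) (a : C), A.NeutrallyReachable q₀ r ∧ A.callTr r a q₀ γ

def Rooted (A : VPA C I Q Γ) (q₀ : Q) (c : Q × List Γ) : Prop :=
  A.NeutrallyReachable q₀ c.1 ∧ ∀ γ ∈ c.2, A.Pushable q₀ γ

variable {q₀ : Q}

theorem rooted_init : A.Rooted q₀ (q₀, []) :=
  ⟨fun _ => ⟨[], .refl _⟩, by simp⟩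

theorem Step.rooted (hcall : ∀ {q a q' γ}, A.callTr q a q' γ → q' = q₀)
    {c c' : Q × List Γ} {x : PSym C I} (hs : A.Step c x c') (hc : A.Rooted q₀ c) :
    A.Rooted q₀ c' := by
  obtain ⟨hreach, hstack⟩ := hc
  cases hs with
  | call ht =>
    cases hcall ht
    exact ⟨fun _ => ⟨[], .refl _⟩,
      List.forall_mem_cons.2 ⟨⟨_, _, hreach, ht⟩, hstack⟩⟩
  | @ret _ _ γ _ _ ht =>
    refine ⟨fun σ => ?_, fun γ' hγ' => hstack γ' (List.mem_cons_of_mem _ hγ')⟩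
    -- replay the call that pushed `γ`, now on top of `σ`, then continue to `q` and return
    obtain ⟨r, b, hr, hpush⟩ := hstack γ List.mem_cons_self
    obtain ⟨s₁, h₁⟩ := hr σ
    obtain ⟨s₂, h₂⟩ := hreach (γ :: σ)
    exact ⟨_, h₁.append (.step (.call hpush) (h₂.append (.single (.ret ht))))⟩
  | int ht =>
    refine ⟨fun σ => ?_, hstack⟩
    obtain ⟨s, h⟩ := hreach σ
    exact ⟨_, h.append (.single (.int ht))⟩

theorem Run.rooted (hcall : ∀ {q a q' γ}, A.callTr q a q' γ → q' = q₀)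
    {c c' : Q × List Γ} {w : List (PSym C I)} (hr : A.Run c w c') (hc : A.Rooted q₀ c) :
    A.Rooted q₀ c' := by
  induction hr with
  | refl => exact hc
  | step hs _ ih => exact ih (hs.rooted hcall hc)

theorem exists_run_init_of_forall_pushable {σ : List Γ}
    (hσ : ∀ γ ∈ σ, A.Pushable q₀ γ) :
    ∃ w : List (PSym C I), A.Run (q₀, []) w (q₀, σ) := by
  induction σ with
  | nil => exact ⟨[], .refl _⟩
  | cons γ σ ih =>
    obtain ⟨hγ, hσ⟩ := List.forall_mem_cons.1 hσ
    obtain ⟨w, hw⟩ := ih hσ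
    obtain ⟨r, a, hr, hpush⟩ := hγ
    obtain ⟨s, hs⟩ := hr σ
    exact ⟨_, (hw.append hs).append (.single (.call hpush))⟩

theorem IsOneSEVPA.callTr_eq {A : VPA C I Q (Q × C)} (h : A.IsOneSEVPA q₀)
    {q : Q} {a : C} {q' : Q} {γ : Q × C} (ht : A.callTr q a q' γ) : q' = q₀ :=
  (h.2.2 q a q' γ ht).1

end VPA

/-- In a 1-SEVPA in which every state is reachable, a state `p` is not a bin
state iff there are runs `(q₀, ε) →ʷ (q₀, σ)` and `(p, σ) →ʷ' (q, ε)` with `q`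
final. -/
theorem not_bin_iff_mem_R {C I Q : Type} (A : VPA C I Q (Q × C)) (q₀ : Q)
    (h : A.IsOneSEVPA q₀)
    (hreach : ∀ p : Q, ∃ (w : List (PSym C I)) (σ : List (Q × C)),
      VPA.Run A (q₀, []) w (p, σ))
    (p : Q) :
    (∃ (w : List (PSym C I)) (σ : List (Q × C)) (w' : List (PSym C I)) (q : Q),
        q ∈ A.final ∧ VPA.Run A (q₀, []) w (p, σ) ∧ VPA.Run A (p, σ) w' (q, [])) ↔
    (∃ (w w' : List (PSym C I)) (σ : List (Q × C)) (q : Q),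
        q ∈ A.final ∧ VPA.Run A (q₀, []) w (q₀, σ) ∧
        VPA.Run A (p, σ) w' (q, [])) := by
  constructor
  · rintro ⟨w, σ, w', q, hq, hw, hw'⟩
    have hstack := (hw.rooted h.callTr_eq VPA.rooted_init).2
    obtain ⟨w₀, hw₀⟩ := VPA.exists_run_init_of_forall_pushable hstack
    exact ⟨w₀, w', σ, q, hq, hw₀, hw'⟩
  · rintro ⟨w, w', σ, q, hq, hw, hw'⟩
    obtain ⟨u, τ, hu⟩ := hreach p
    obtain ⟨s, hs⟩ := (hu.rooted h.callTr_eq VPA.rooted_init).1 σ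
    exact ⟨w ++ s, σ, w', q, hq, hw.append hs, hw'⟩
end
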